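/- arXiv:0905.1640 — 3 statements merged into one kernel-verified Lean document; each statement's English description precedes it below -/
import Mathlib

section
/- Let S be a set and f : S^k → ℝ a nonnegative symmetric function of k arguments such that for all x₁,…,x_k ∈ S, f(x₁,x₂,x₃,…,x_k)² ≤ f(x₁,x₁,x₃,…,x_k)·f(x₂,x₂,x₃,…,x_k). Then for all x₁,…,x_k ∈ S, f(x₁,…,x_k)^k ≤ ∏_{j=1}^k f(x_j,x_j,…,x_j). -/
/-!
Replacing `f` by `f + ε` makes it positive without breaking the hypothesis, so we may take
logarithms: `g v = log f (x ∘ v)` on maps `v : ι → ι` satisfies `2 g v ≤ g v' + g v''`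
whenever `v'`, `v''` arise from `v` by copying a coordinate onto another one in either
direction. So does `G v = |ι| g v - ∑ i, g (const (v i))`, which vanishes on constant maps.
If `w` maximises `G`, both exchanges of `w` are maximisers again; copying one coordinate of `w`
onto all others therefore reaches a constant maximiser, so `G ≤ 0`, and `G id ≤ 0` is the claim.
-/

open Finset Function Filter Topology

theorem Fintype.sum_update_eq_sub_add {ι M : Type*} [Fintype ι] [DecidableEq ι] [AddCommGroup M]
    (f : ι → M) (j : ι) (b : M) : ∑ l, update f j b l = ∑ l, f l - f j + b := by
  rw [sum_update_of_mem (mem_univ j), sdiff_singleton_eq_erase, ← add_sum_erase _ _ (mem_univ j)]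
  abel

section ExchangeConcave

variable {ι α β : Type*} [DecidableEq ι]

def ExchangeConcave [Add β] [LE β] [SMul ℕ β] (G : (ι → α) → β) : Prop :=
  ∀ v i j, i ≠ j → 2 • G v ≤ G (update v j (v i)) + G (update v i (v j))

variable [AddCommGroup β] [LinearOrder β] [IsOrderedAddMonoid β] {G : (ι → α) → β}

namespace ExchangeConcave

theorem forall_le_update (hG : ExchangeConcave G) {w : ι → α} (hw : ∀ u, G u ≤ G w)
    (i j : ι) (u : ι → α) : G u ≤ G (update w j (w i)) := by
  rcases eq_or_ne i j with rfl | hij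
  · rw [update_eq_self]; exact hw u
  · have hmid : G w + G w ≤ G (update w j (w i)) + G w := by
      rw [← two_nsmul]; exact (hG w i j hij).trans (add_le_add le_rfl (hw _))
    exact (hw u).trans (le_of_add_le_add_right hmid)

theorem forall_le_const [Fintype ι] (hG : ExchangeConcave G) {w : ι → α}
    (hw : ∀ u, G u ≤ G w) (i : ι) (u : ι → α) : G u ≤ G (fun _ => w i) := by
  suffices ∀ s : Finset ι, ∀ u, G u ≤ G (s.piecewise (fun _ => w i) w) by
    simpa using this univ u
  intro s
  induction s using Finset.induction_on with
  | empty => simpa using hw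
  | insert j s _ ih =>
    have hi : s.piecewise (fun _ => w i) w i = w i := by
      by_cases h : i ∈ s <;> simp [h]
    rw [piecewise_insert]
    simpa only [hi] using hG.forall_le_update ih i j

theorem exists_le_const [Fintype ι] [Nonempty ι] [Finite α] (hG : ExchangeConcave G)
    (v : ι → α) : ∃ a, G v ≤ G (fun _ => a) := by
  have : Nonempty (ι → α) := ⟨v⟩
  obtain ⟨w, hw⟩ := Finite.exists_max G
  exact ⟨w (Classical.arbitrary ι), hG.forall_le_const hw _ v⟩

theorem card_nsmul_sub_sum [Fintype ι] (hG : ExchangeConcave G) :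
    ExchangeConcave fun v => Fintype.card ι • G v - ∑ i, G (fun _ => v i) := by
  intro v i j hij
  have hupd (j : ι) (a : α) :
      ∑ l, G (fun _ => update v j a l) =
        ∑ l, G (fun _ => v l) - G (fun _ => v j) + G fun _ => a := by
    simpa only [← comp_update, comp_apply] using
      Fintype.sum_update_eq_sub_add ((fun a => G fun _ => a) ∘ v) j (G fun _ => a)
  calc 2 • (Fintype.card ι • G v - ∑ l, G (fun _ => v l))
      = Fintype.card ι • (2 • G v) - 2 • ∑ l, G (fun _ => v l) := by
        rw [smul_sub, smul_comm]
    _ ≤ Fintype.card ι • (G (update v j (v i)) + G (update v i (v j))) -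
          2 • ∑ l, G (fun _ => v l) := by
        gcongr; exact hG v i j hij
    _ = _ := by simp only [hupd, smul_add]; abel

theorem card_nsmul_le_sum [Fintype ι] [Nonempty ι] [Finite α] (hG : ExchangeConcave G)
    (v : ι → α) : Fintype.card ι • G v ≤ ∑ i, G (fun _ => v i) := by
  obtain ⟨a, ha⟩ := hG.card_nsmul_sub_sum.exists_le_const v
  simpa [sub_nonpos] using ha

end ExchangeConcave

end ExchangeConcave

section ExchangeLogConcave

variable {ι α S : Type*} [DecidableEq ι]

def ExchangeLogConcave (f : (ι → α) → ℝ) : Prop :=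
  ∀ v i j, i ≠ j → f v ^ 2 ≤ f (update v j (v i)) * f (update v i (v j))

namespace ExchangeLogConcave

theorem comp_comp {f : (ι → S) → ℝ} (hf : ExchangeLogConcave f) (x : α → S) :
    ExchangeLogConcave fun v : ι → α => f (x ∘ v) := by
  intro v i j hij
  simp only [comp_update]
  exact hf (x ∘ v) i j hij

theorem exchangeConcave_log {f : (ι → α) → ℝ} (hf : ExchangeLogConcave f)
    (hpos : ∀ v, 0 < f v) : ExchangeConcave fun v => Real.log (f v) := by
  intro v i j hij
  rw [two_nsmul, ← Real.log_mul (hpos v).ne' (hpos v).ne',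
    ← Real.log_mul (hpos _).ne' (hpos _).ne']
  exact Real.log_le_log (by have := hpos v; positivity) (by simpa [sq] using hf v i j hij)

theorem add_const {f : (ι → α) → ℝ} (hf : ExchangeLogConcave f) (hnn : ∀ v, 0 ≤ f v)
    {ε : ℝ} (hε : 0 ≤ ε) : ExchangeLogConcave fun v => f v + ε := by
  intro v i j hij
  have hCS := hf v i j hij
  set a := f (update v j (v i))
  set b := f (update v i (v j))
  -- `f v ≤ √(a b) ≤ (a + b) / 2`
  have hAMGM : 2 * f v ≤ a + b := by
    nlinarith [hnn v, hnn (update v j (v i)), hnn (update v i (v j)), sq_nonneg (a - b)]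
  nlinarith

theorem pow_card_le_prod_of_pos [Fintype ι] [Nonempty ι] {f : (ι → S) → ℝ}
    (hf : ExchangeLogConcave f) (hpos : ∀ v, 0 < f v) (x : ι → S) :
    f x ^ Fintype.card ι ≤ ∏ i, f (fun _ => x i) := by
  have hlog := ((hf.comp_comp x).exchangeConcave_log fun _ => hpos _).card_nsmul_le_sum id
  rw [← Real.log_le_log_iff (pow_pos (hpos x) _) (prod_pos fun i _ => hpos _), Real.log_pow,
    Real.log_prod fun i _ => (hpos _).ne']
  simpa [comp_def] using hlog

theorem pow_card_le_prod [Fintype ι] [Nonempty ι] {f : (ι → S) → ℝ}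
    (hf : ExchangeLogConcave f) (hnn : ∀ v, 0 ≤ f v) (x : ι → S) :
    f x ^ Fintype.card ι ≤ ∏ i, f (fun _ => x i) := by
  have hε (ε : ℝ) (hε : 0 < ε) : f x ^ Fintype.card ι ≤ ∏ i, (f (fun _ => x i) + ε) :=
    (pow_le_pow_left₀ (hnn x) (le_add_of_nonneg_right hε.le) _).trans <|
      (hf.add_const hnn hε.le).pow_card_le_prod_of_pos (fun v => by linarith [hnn v]) x
  have hlim : Tendsto (fun ε => ∏ i, (f (fun _ => x i) + ε)) (𝓝[>] 0)
      (𝓝 (∏ i, f (fun _ => x i))) := by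
    have hcont : Continuous fun ε : ℝ => ∏ i, (f (fun _ => x i) + ε) := by fun_prop
    simpa using (hcont.tendsto 0).mono_left nhdsWithin_le_nhds
  exact ge_of_tendsto hlim (eventually_nhdsWithin_of_forall hε)

end ExchangeLogConcave

end ExchangeLogConcave

theorem hessian_alg_lemma_general {S : Type*} (k : ℕ) (hk : 1 ≤ k) (f : (Fin k → S) → ℝ)
    (hnn : ∀ x : Fin k → S, 0 ≤ f x)
    (hCS : ∀ (x : Fin k → S) (i j : Fin k), i ≠ j →
      f x ^ 2 ≤ f (Function.update x j (x i)) * f (Function.update x i (x j)))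
    (x : Fin k → S) :
    f x ^ k ≤ ∏ a : Fin k, f (fun _ => x a) := by
  have : Nonempty (Fin k) := ⟨⟨0, hk⟩⟩
  simpa using ExchangeLogConcave.pow_card_le_prod hCS hnn x

/-- Abstract algebraic lemma: a nonnegative symmetric function of `k`
arguments satisfying a Cauchy–Schwarz type inequality in two of its arguments satisfies
`f(x₁,…,x_k)^k ≤ ∏ f(x_j,…,x_j)`. -/
theorem hessian_alg_lemma {S : Type*} (k : ℕ) (hk : 1 ≤ k) (f : (Fin k → S) → ℝ)
    (hnn : ∀ x : Fin k → S, 0 ≤ f x)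
    (hsym : ∀ (σ : Equiv.Perm (Fin k)) (x : Fin k → S), f (x ∘ σ) = f x)
    (hCS : ∀ (x : Fin k → S) (i j : Fin k), i ≠ j →
      f x ^ 2 ≤ f (Function.update x j (x i)) * f (Function.update x i (x j)))
    (x : Fin k → S) :
    f x ^ k ≤ ∏ a : Fin k, f (fun _ => x a) :=
  hessian_alg_lemma_general k hk f hnn hCS x
end

section
/- Let V be a real vector space, S ⊆ V a cone (closed under addition and nonnegative scaling), and f : S^k → ℝ a nonnegative symmetric function which is additive and homogeneous (multilinear) in each argument, satisfying f(x₁,x₂,x₃,…,x_k)² ≤ f(x₁,x₁,x₃,…,x_k)·f(x₂,x₂,x₃,…,x_k) for all arguments in S. Then for all x, y ∈ S, f(x+y,…,x+y)^{1/k} ≤ f(x,…,x)^{1/k} + f(y,…,y)^{1/k}. -/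
open Finset

private lemma chain_aux (g : ℕ → ℝ) (k : ℕ)
    (hg : ∀ i, 0 ≤ g i)
    (hlc : ∀ m, m + 2 ≤ k → g (m+1) ^ 2 ≤ g m * g (m+2)) :
    ∀ d m, m + 1 + d = k → g (m+1) ^ (d+1) ≤ g m ^ d * g k := by
  intro d
  induction d with
  | zero => intro m hm; subst hm; simp
  | succ d ih =>
    intro m hm
    have ih' := ih (m+1) (by omega)
    have hlc' := hlc m (by omega)
    rcases eq_or_lt_of_le (hg (m+1)) with h0 | hpos
    · rw [← h0, zero_pow (by omega)]
      exact mul_nonneg (pow_nonneg (hg m) _) (hg k)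
    have h1 : (g (m+1) ^ 2) ^ (d+1) ≤ (g m * g (m+2)) ^ (d+1) :=
      pow_le_pow_left₀ (sq_nonneg _) hlc' _
    have h2 : g m ^ (d+1) * g (m+2) ^ (d+1) ≤ g m ^ (d+1) * (g (m+1) ^ d * g k) :=
      mul_le_mul_of_nonneg_left ih' (pow_nonneg (hg m) _)
    have key : g (m+1) ^ (d+1+1) * g (m+1) ^ d ≤ (g m ^ (d+1) * g k) * g (m+1) ^ d := by
      calc g (m+1) ^ (d+1+1) * g (m+1) ^ d = (g (m+1) ^ 2) ^ (d+1) := by ring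
      _ ≤ (g m * g (m+2)) ^ (d+1) := h1
      _ = g m ^ (d+1) * g (m+2) ^ (d+1) := by ring
      _ ≤ g m ^ (d+1) * (g (m+1) ^ d * g k) := h2
      _ = (g m ^ (d+1) * g k) * g (m+1) ^ d := by ring
    exact le_of_mul_le_mul_right key (pow_pos hpos d)

private lemma interp_aux (g : ℕ → ℝ) (k : ℕ)
    (hg : ∀ i, 0 ≤ g i)
    (hlc : ∀ m, m + 2 ≤ k → g (m+1) ^ 2 ≤ g m * g (m+2)) :
    ∀ i t, i + t = k → g i ^ k ≤ g 0 ^ t * g k ^ i := by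
  intro i
  induction i with
  | zero => intro t ht; subst ht; simp
  | succ i ih =>
    intro t ht
    have hN : g (i+1) ^ (t+1) ≤ g i ^ t * g k := chain_aux g k hg hlc t i (by omega)
    have hM : g i ^ k ≤ g 0 ^ (t+1) * g k ^ i := ih (t+1) (by omega)
    subst ht
    set K := i + 1 + t with hK
    have h1 : (g (i+1) ^ (t+1)) ^ K ≤ (g i ^ t * g K) ^ K :=
      pow_le_pow_left₀ (pow_nonneg (hg _) _) hN _
    have h2 : (g i ^ K) ^ t ≤ (g 0 ^ (t+1) * g K ^ i) ^ t :=
      pow_le_pow_left₀ (pow_nonneg (hg _) _) hM _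
    have h3 : (g (i+1) ^ K) ^ (t+1) ≤ ((g 0 ^ t * g K ^ (i+1)) ^ (t+1)) := by
      calc (g (i+1) ^ K) ^ (t+1) = (g (i+1) ^ (t+1)) ^ K := by ring
      _ ≤ (g i ^ t * g K) ^ K := h1
      _ = (g i ^ K) ^ t * g K ^ K := by ring
      _ ≤ (g 0 ^ (t+1) * g K ^ i) ^ t * g K ^ K := by
          exact mul_le_mul_of_nonneg_right h2 (pow_nonneg (hg _) _)
      _ = (g 0 ^ t * g K ^ (i+1)) ^ (t+1) := by rw [hK]; ring
    exact le_of_pow_le_pow_left₀ (by omega)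
      (mul_nonneg (pow_nonneg (hg _) _) (pow_nonneg (hg _) _)) h3

/-- Minkowski-type inequality for the diagonal of a nonnegative symmetric
multilinear function on a cone satisfying the Cauchy–Schwarz type inequality. -/
theorem hessian_alg_lemma_minkowski {V : Type*} [AddCommGroup V] [Module ℝ V] (S : Set V)
    (hSsmul : ∀ x ∈ S, ∀ c : ℝ, 0 ≤ c → c • x ∈ S)
    (hSadd : ∀ x ∈ S, ∀ y ∈ S, x + y ∈ S)
    (k : ℕ) (hk : 1 ≤ k) (f : (Fin k → V) → ℝ)
    (hnn : ∀ x : Fin k → V, (∀ a, x a ∈ S) → 0 ≤ f x)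
    (hsym : ∀ (σ : Equiv.Perm (Fin k)) (x : Fin k → V), (∀ a, x a ∈ S) → f (x ∘ σ) = f x)
    (hadd : ∀ (x : Fin k → V), (∀ a, x a ∈ S) → ∀ (i : Fin k), ∀ y ∈ S, ∀ z ∈ S,
      f (Function.update x i (y + z)) = f (Function.update x i y) + f (Function.update x i z))
    (hsmul : ∀ (x : Fin k → V), (∀ a, x a ∈ S) → ∀ (i : Fin k), ∀ y ∈ S, ∀ c : ℝ, 0 ≤ c →
      f (Function.update x i (c • y)) = c * f (Function.update x i y))
    (hCS : ∀ (x : Fin k → V), (∀ a, x a ∈ S) → ∀ (i j : Fin k), i ≠ j →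
      f x ^ 2 ≤ f (Function.update x j (x i)) * f (Function.update x i (x j)))
    (x y : V) (hx : x ∈ S) (hy : y ∈ S) :
    f (fun _ => x + y) ^ ((1 : ℝ) / k) ≤
      f (fun _ => x) ^ ((1 : ℝ) / k) + f (fun _ => y) ^ ((1 : ℝ) / k) := by
  classical
  set X : ℕ → (Fin k → V) := fun i a => if (a : ℕ) < i then x else y with hX
  set g : ℕ → ℝ := fun i => f (X i) with hg
  have hXS : ∀ i, ∀ a, X i a ∈ S := by
    intro i a
    simp only [hX]
    split_ifs <;> [exact hx; exact hy]
  have hgnn : ∀ i, 0 ≤ g i := fun i => hnn _ (hXS i)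
  -- log-convexity of g
  have hlc : ∀ m, m + 2 ≤ k → g (m+1) ^ 2 ≤ g m * g (m+2) := by
    intro m hm
    have hmk : m < k := by omega
    have hm1k : m + 1 < k := by omega
    have hcs := hCS (X (m+1)) (hXS (m+1)) ⟨m, hmk⟩ ⟨m+1, hm1k⟩
      (by simp [Fin.ext_iff])
    have hvx : X (m+1) ⟨m, hmk⟩ = x := by simp [hX]
    have hvy : X (m+1) ⟨m+1, hm1k⟩ = y := by simp [hX]
    rw [hvx, hvy] at hcs
    have e1 : Function.update (X (m+1)) ⟨m+1, hm1k⟩ x = X (m+2) := by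
      funext a
      rw [Function.update_apply]
      by_cases h1 : a = (⟨m+1, hm1k⟩ : Fin k)
      · rw [if_pos h1]
        simp only [hX]
        rw [if_pos (by simp [h1])]
      · have hne : (a : ℕ) ≠ m + 1 := fun hc => h1 (Fin.ext hc)
        rw [if_neg h1]
        simp only [hX]
        split_ifs <;> first | rfl | omega
    have e2 : Function.update (X (m+1)) ⟨m, hmk⟩ y = X m := by
      funext a
      rw [Function.update_apply]
      by_cases h1 : a = (⟨m, hmk⟩ : Fin k)
      · rw [if_pos h1]
        simp only [hX]
        rw [if_neg (by simp [h1])]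
      · have hne : (a : ℕ) ≠ m := fun hc => h1 (Fin.ext hc)
        rw [if_neg h1]
        simp only [hX]
        split_ifs <;> first | rfl | omega
    rw [e1, e2] at hcs
    calc g (m+1) ^ 2 ≤ g (m+2) * g m := hcs
    _ = g m * g (m+2) := mul_comm _ _
  -- multilinear expansion of the diagonal over subsets
  have expand : ∀ m, m ≤ k → f (fun _ => x + y) =
      ∑ T ∈ (univ.filter (fun a : Fin k => (a : ℕ) < m)).powerset,
        f (fun a => if a ∈ T then x else if (a : ℕ) < m then y else x + y) := by
    intro m
    induction m with
    | zero =>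
      intro _
      have h0 : (univ.filter (fun a : Fin k => (a : ℕ) < 0)) = (∅ : Finset (Fin k)) := by
        simp
      rw [h0, Finset.powerset_empty, Finset.sum_singleton]
      simp
    | succ m ih =>
      intro hm
      have hfilter : univ.filter (fun a : Fin k => (a : ℕ) < m + 1) =
          insert ⟨m, by omega⟩ (univ.filter (fun a : Fin k => (a : ℕ) < m)) := by
        ext a
        simp only [Finset.mem_filter, Finset.mem_insert, Finset.mem_univ, true_and,
          Fin.ext_iff]
        omega
      have he : (⟨m, by omega⟩ : Fin k) ∉ univ.filter (fun a : Fin k => (a : ℕ) < m) := by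
        simp
      rw [ih (by omega), hfilter, Finset.sum_powerset_insert he, ← Finset.sum_add_distrib]
      apply Finset.sum_congr rfl
      intro T hT
      rw [Finset.mem_powerset] at hT
      set e : Fin k := ⟨m, by omega⟩ with hedef
      have heT : e ∉ T := fun hc => by
        have := hT hc
        simp [hedef] at this
      set w : Fin k → V := fun a => if a ∈ T then x else if (a : ℕ) < m then y else x + y
        with hw
      have hwS : ∀ a, w a ∈ S := by
        intro a
        simp only [hw]
        split_ifs <;> [exact hx; exact hy; exact hSadd x hx y hy]
      have hwe : w e = x + y := by
        simp only [hw]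
        rw [if_neg heT, if_neg (by simp [hedef])]
      have hsplit : f w = f (Function.update w e x) + f (Function.update w e y) := by
        conv_lhs => rw [← Function.update_eq_self e w, hwe]
        exact hadd w hwS e x hx y hy
      have e1 : Function.update w e x =
          fun a => if a ∈ insert e T then x else if (a : ℕ) < m + 1 then y else x + y := by
        funext a
        rw [Function.update_apply]
        by_cases h1 : a = e
        · rw [if_pos h1, if_pos (by simp [h1])]
        · have hne : (a : ℕ) ≠ m := fun hc => h1 (Fin.ext hc)
          rw [if_neg h1]
          simp only [hw, Finset.mem_insert, h1, false_or]
          split_ifs <;> first | rfl | omega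
      have e2 : Function.update w e y =
          fun a => if a ∈ T then x else if (a : ℕ) < m + 1 then y else x + y := by
        funext a
        rw [Function.update_apply]
        by_cases h1 : a = e
        · rw [if_pos h1, if_neg (by rw [h1]; exact heT), if_pos (by simp [h1, hedef])]
        · have hne : (a : ℕ) ≠ m := fun hc => h1 (Fin.ext hc)
          rw [if_neg h1]
          simp only [hw]
          split_ifs <;> first | rfl | omega
      rw [hsplit, e1, e2, add_comm]
  -- cardinality of the initial segments
  have hcard : ∀ i, i ≤ k → (univ.filter (fun a : Fin k => (a : ℕ) < i)).card = i := by
    intro i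
    induction i with
    | zero => intro _; simp
    | succ n ihn =>
      intro hn
      have h1 : univ.filter (fun a : Fin k => (a : ℕ) < n + 1) =
          insert ⟨n, by omega⟩ (univ.filter (fun a : Fin k => (a : ℕ) < n)) := by
        ext a
        simp only [Finset.mem_filter, Finset.mem_insert, Finset.mem_univ, true_and, Fin.ext_iff]
        omega
      rw [h1, Finset.card_insert_of_notMem (by simp), ihn (by omega)]
  -- every subset of cardinality i contributes g i
  have hgroup : ∀ i, i ≤ k → ∀ T : Finset (Fin k), T.card = i →
      f (fun a => if a ∈ T then x else y) = g i := by
    intro i hi T hT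
    set T₀ := univ.filter (fun a : Fin k => (a : ℕ) < i) with hT₀
    have hcards : T₀.card = T.card := by rw [hcard i hi, hT]
    have e0 : {a : Fin k // a ∈ T₀} ≃ {a : Fin k // a ∈ T} := Finset.equivOfCardEq hcards
    have hσ : ∀ a : Fin k, e0.extendSubtype a ∈ T ↔ a ∈ T₀ := by
      intro a
      by_cases h : a ∈ T₀
      · exact iff_of_true (e0.extendSubtype_mem a h) h
      · exact iff_of_false (e0.extendSubtype_not_mem a h) h
    have huS : ∀ a, (if a ∈ T then x else y) ∈ S := by
      intro a; split_ifs <;> [exact hx; exact hy]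
    have hcomp : (fun a => if a ∈ T then x else y) ∘ e0.extendSubtype = X i := by
      funext a
      simp only [Function.comp_apply, hX]
      by_cases h : (a : ℕ) < i
      · rw [if_pos ((hσ a).2 (by simp [hT₀, h])), if_pos h]
      · rw [if_neg (fun hc => h (by simpa [hT₀] using (hσ a).1 hc)), if_neg h]
    have hs := hsym e0.extendSubtype (fun a => if a ∈ T then x else y) huS
    rw [hcomp] at hs
    exact hs.symm
  -- the binomial expansion
  have hfull : univ.filter (fun a : Fin k => (a : ℕ) < k) = (univ : Finset (Fin k)) := by
    ext a; simp [a.isLt]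
  have hmain : f (fun _ => x + y) = ∑ i ∈ range (k+1), (k.choose i : ℝ) * g i := by
    rw [expand k le_rfl, hfull]
    have hterm : ∀ T : Finset (Fin k),
        (fun a => if a ∈ T then x else if (a : ℕ) < k then y else x + y) =
        (fun a => if a ∈ T then x else y) := by
      intro T; funext a; simp [a.isLt]
    calc ∑ T ∈ (univ : Finset (Fin k)).powerset,
          f (fun a => if a ∈ T then x else if (a : ℕ) < k then y else x + y)
        = ∑ T ∈ (univ : Finset (Fin k)).powerset, f (fun a => if a ∈ T then x else y) :=
          Finset.sum_congr rfl fun T _ => by rw [hterm T]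
      _ = ∑ i ∈ range ((univ : Finset (Fin k)).card + 1),
            ∑ T ∈ (univ : Finset (Fin k)).powersetCard i, f (fun a => if a ∈ T then x else y) :=
          Finset.sum_powerset _ _
      _ = ∑ i ∈ range (k+1), (k.choose i : ℝ) * g i := by
          rw [Finset.card_univ, Fintype.card_fin]
          refine Finset.sum_congr rfl fun i hi => ?_
          rw [Finset.mem_range] at hi
          have hgi : ∀ T ∈ (univ : Finset (Fin k)).powersetCard i,
              f (fun a => if a ∈ T then x else y) = g i := by
            intro T hT
            rw [Finset.mem_powersetCard] at hT
            exact hgroup i (by omega) T hT.2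
          rw [Finset.sum_congr rfl hgi, Finset.sum_const, Finset.card_powersetCard,
            Finset.card_univ, Fintype.card_fin, nsmul_eq_mul]
  -- endpoints
  have hgk : g k = f (fun _ => x) := by
    have hXk : X k = fun _ => x := by funext a; simp [hX, a.isLt]
    simp only [hg, hXk]
  have hg0 : g 0 = f (fun _ => y) := by
    have hX0 : X 0 = fun _ => y := by funext a; simp [hX]
    simp only [hg, hX0]
  -- final assembly via rpow
  have hA0 : 0 ≤ f (fun _ => x) := hnn _ (fun _ => hx)
  have hB0 : 0 ≤ f (fun _ => y) := hnn _ (fun _ => hy)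
  have hC0 : 0 ≤ f (fun _ => x + y) := hnn _ (fun _ => hSadd x hx y hy)
  set a : ℝ := f (fun _ => x) ^ ((1 : ℝ) / k) with ha
  set b : ℝ := f (fun _ => y) ^ ((1 : ℝ) / k) with hb
  have ha0 : 0 ≤ a := Real.rpow_nonneg hA0 _
  have hb0 : 0 ≤ b := Real.rpow_nonneg hB0 _
  have hkR : (k : ℝ) ≠ 0 := Nat.cast_ne_zero.2 (by omega)
  have hak : a ^ k = f (fun _ => x) := by
    rw [ha, ← Real.rpow_natCast (f (fun _ => x) ^ ((1 : ℝ) / k)) k, ← Real.rpow_mul hA0,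
      one_div_mul_cancel hkR, Real.rpow_one]
  have hbk : b ^ k = f (fun _ => y) := by
    rw [hb, ← Real.rpow_natCast (f (fun _ => y) ^ ((1 : ℝ) / k)) k, ← Real.rpow_mul hB0,
      one_div_mul_cancel hkR, Real.rpow_one]
  have hbound : ∀ i, i ≤ k → g i ≤ a ^ i * b ^ (k - i) := by
    intro i hi
    have hM := interp_aux g k hgnn hlc i (k - i) (by omega)
    have h3 : g i ^ k ≤ (a ^ i * b ^ (k - i)) ^ k := by
      calc g i ^ k ≤ g 0 ^ (k - i) * g k ^ i := hM
      _ = (b ^ k) ^ (k - i) * (a ^ k) ^ i := by rw [hg0, hgk, hbk, hak]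
      _ = (a ^ i * b ^ (k - i)) ^ k := by ring
    exact le_of_pow_le_pow_left₀ (by omega)
      (mul_nonneg (pow_nonneg ha0 _) (pow_nonneg hb0 _)) h3
  have hsum : f (fun _ => x + y) ≤ (a + b) ^ k := by
    rw [hmain, add_pow]
    apply Finset.sum_le_sum
    intro i hi
    rw [Finset.mem_range] at hi
    calc (k.choose i : ℝ) * g i ≤ (k.choose i : ℝ) * (a ^ i * b ^ (k - i)) :=
      mul_le_mul_of_nonneg_left (hbound i (by omega)) (by positivity)
    _ = a ^ i * b ^ (k - i) * (k.choose i : ℝ) := by ring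
  calc f (fun _ => x + y) ^ ((1 : ℝ) / k) ≤ ((a + b) ^ k) ^ ((1 : ℝ) / k) :=
    Real.rpow_le_rpow hC0 hsum (by positivity)
  _ = a + b := by
    rw [← Real.rpow_natCast (a + b) k, ← Real.rpow_mul (by positivity),
      mul_one_div_cancel hkR, Real.rpow_one]
end

section
/- For λ ∈ ℝ^n and the vector e = (1,…,1) ∈ ℝ^n, the polarization identity S̃_k(λ,…,λ,e,…,e) = S_m(λ), where λ appears m times and e appears k−m times, holds with the normalized elementary symmetric functions S_j(λ) = (j!(n−j)!/n!) Σ_{i₁<…<i_j} λ_{i₁}⋯λ_{i_j}. -/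
/-! Expanding the polarization as a sum over injections `f : Fin k ↪ Fin n`, a term only
depends on the restriction of `f` to the `m` slots carrying `λ`. Each injection of `Fin m`
extends in `(n-m)!/(n-k)!` ways, and each `m`-subset is the image of exactly `m!` injections
of `Fin m`, which turns the normalizing constant of `S̃_k` into that of `S_m`. -/

open Finset

noncomputable section

/-- The normalized `k`-th elementary symmetric function on `ℝⁿ`:
`S_k(λ) = (k!(n−k)!/n!) Σ_{i₁<…<i_k} λ_{i₁}⋯λ_{i_k}`. -/
def normESymm (n k : ℕ) (l : Fin n → ℝ) : ℝ :=
  ((k.factorial * (n - k).factorial : ℕ) : ℝ) / (n.factorial : ℕ) *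
    ∑ s ∈ Finset.univ.powersetCard k, ∏ i ∈ s, l i

/-- The Gårding cone `Γ_k = {λ : S_j(λ) ≥ 0, j = 1,…,k}`. -/
def gardingCone (n k : ℕ) : Set (Fin n → ℝ) :=
  {l | ∀ j : ℕ, 1 ≤ j → j ≤ k → 0 ≤ normESymm n j l}

/-- The complete polarization `S̃_k` of the normalized elementary symmetric function:
the unique symmetric multilinear function with `S̃_k(λ,…,λ) = S_k(λ)`. -/
def polarESymm (n k : ℕ) (v : Fin k → Fin n → ℝ) : ℝ :=
  ((k.factorial * (n - k).factorial : ℕ) : ℝ) / (n.factorial : ℕ) *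
    ((1 : ℝ) / (k.factorial : ℕ)) * ∑ f : Fin k ↪ Fin n, ∏ a : Fin k, v a (f a)

section Embeddings

variable {ι κ α M : Type*} [Fintype ι] [Fintype κ] [Fintype α] [DecidableEq α]
  [AddCommMonoid M]

theorem Fintype.sum_embedding_sum_comp_inl (F : (ι ↪ α) → M) :
    ∑ f : ι ⊕ κ ↪ α, F (Function.Embedding.inl.trans f) =
      (Fintype.card α - Fintype.card ι).descFactorial (Fintype.card κ) • ∑ g : ι ↪ α, F g := by
  rw [← Fintype.sum_equiv Equiv.sumEmbeddingEquivSigmaEmbeddingRestricted.symm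
    (fun p => F p.1) _ (fun _ => rfl), Fintype.sum_sigma, Finset.smul_sum]
  refine Finset.sum_congr rfl fun g _ => ?_
  simp only [Finset.sum_const, Finset.card_univ, Fintype.card_embedding_eq,
    Fintype.card_compl_set, Set.card_range_of_injective g.injective]

theorem Fintype.sum_embedding_comp_castAddEmb {m j : ℕ} (F : (Fin m ↪ α) → M) :
    ∑ f : Fin (m + j) ↪ α, F ((Fin.castAddEmb j).trans f) =
      (Fintype.card α - m).descFactorial j • ∑ g : Fin m ↪ α, F g := by
  have h := Fintype.sum_embedding_sum_comp_inl (κ := Fin j) F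
  simp only [Fintype.card_fin] at h
  rw [← h]
  exact Fintype.sum_equiv (Equiv.embeddingCongr finSumFinEquiv.symm (Equiv.refl α)) _ _
    fun _ => rfl

theorem Fintype.card_embedding_filter_map_univ_eq_factorial {s : Finset α}
    (hs : s.card = Fintype.card ι) :
    #{g : ι ↪ α | univ.map g = s} = (Fintype.card ι).factorial := by
  have e : {g : ι ↪ α // univ.map g = s} ≃ (ι ↪ s) :=
    (Equiv.subtypeEquivProp (by
      ext g
      refine ⟨by rintro rfl a; simp, fun h => ?_⟩
      refine Finset.eq_of_subset_of_card_le (fun x hx => ?_) (by simp [hs])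
      obtain ⟨a, -, rfl⟩ := Finset.mem_map.1 hx
      exact h a)).trans (Equiv.codRestrict ι (s : Set α))
  rw [← Fintype.card_subtype, Fintype.card_congr e, Fintype.card_embedding_eq, Fintype.card_coe,
    hs, Nat.descFactorial_self]

theorem Fintype.sum_embedding_comp_map_univ (G : Finset α → M) :
    ∑ g : ι ↪ α, G (univ.map g) =
      (Fintype.card ι).factorial • ∑ s ∈ univ.powersetCard (Fintype.card ι), G s := by
  rw [← Finset.sum_fiberwise_of_maps_to (g := fun g : ι ↪ α => univ.map g)
    (t := univ.powersetCard (Fintype.card ι)) (by simp), Finset.smul_sum]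
  refine Finset.sum_congr rfl fun s hs => ?_
  rw [Finset.sum_congr rfl fun g hg => congrArg G (Finset.mem_filter.1 hg).2, Finset.sum_const,
    Fintype.card_embedding_filter_map_univ_eq_factorial (Finset.mem_powersetCard_univ.1 hs)]

end Embeddings

/-- Polarization identity: `S̃_k(λ,…,λ,e,…,e) = S_m(λ)` where `λ` appears
`m` times and `e = (1,…,1)` appears `k−m` times. -/
theorem polarESymm_ones (n k m : ℕ) (hmk : m ≤ k) (hkn : k ≤ n) (l : Fin n → ℝ) :
    polarESymm n k (fun a => if (a : ℕ) < m then l else fun _ => (1 : ℝ)) =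
      normESymm n m l := by
  obtain ⟨j, rfl⟩ := Nat.exists_eq_add_of_le hmk
  have hprod (f : Fin (m + j) ↪ Fin n) :
      ∏ a : Fin (m + j), (if (a : ℕ) < m then l else fun _ => 1) (f a) =
        ∏ i ∈ univ.map ((Fin.castAddEmb j).trans f), l i := by
    simp [Fin.prod_univ_add]
  have hfact : (n - (m + j)).factorial * (n - m).descFactorial j = (n - m).factorial := by
    rw [← Nat.sub_sub, Nat.factorial_mul_descFactorial (by omega)]
  rw [polarESymm, normESymm, Fintype.sum_congr _ _ hprod,
    Fintype.sum_embedding_comp_castAddEmb (F := fun g => ∏ i ∈ univ.map g, l i),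
    Fintype.sum_embedding_comp_map_univ (G := fun s => ∏ i ∈ s, l i), ← hfact]
  simp only [Fintype.card_fin, nsmul_eq_mul]
  push_cast
  field_simp

end
end
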